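/- arXiv:1508.06847 — 2 statements merged into one kernel-verified Lean document; each statement's English description precedes it below -/
import Mathlib

section
/- Let G be a graph, S ⊆ V(G), z ∈ V(G) \ S, k a non-negative integer, and w a vertex at distance at least k from z in G. If t(G,S,w) ≥ k, then t(G,S,w) ≥ t(G, S ∪ {z}, w) ≥ k. -/
open SimpleGraph

/-- One round of 2-neighbor bootstrap percolation: add every vertex with
at least two (distinct) infected neighbors. -/
def infectStep {V : Type} (G : SimpleGraph V) (S : Set V) : Set V :=
  S ∪ {v | ∃ u w, u ≠ w ∧ G.Adj v u ∧ G.Adj v w ∧ u ∈ S ∧ w ∈ S}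

/-- The infected set after `n` rounds starting from `S`. -/
def stage {V : Type} (G : SimpleGraph V) (S : Set V) : ℕ → Set V
  | 0 => S
  | n + 1 => infectStep G (stage G S n)

/-- `S` percolates: eventually every vertex is infected. -/
def Percolates {V : Type} (G : SimpleGraph V) (S : Set V) : Prop :=
  ∃ t, stage G S t = Set.univ

/-- The infection time of `v` (`⊤` if `v` is never infected). -/
noncomputable def infTime {V : Type} (G : SimpleGraph V) (S : Set V) (v : V) : ℕ∞ :=
  sInf {n : ℕ∞ | ∃ i : ℕ, n = (i : ℕ∞) ∧ v ∈ stage G S i}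

/-- The percolation time of a percolating set `S`. -/
noncomputable def percTime {V : Type} (G : SimpleGraph V) (S : Set V) : ℕ :=
  sInf {t | stage G S t = Set.univ}

/-- The maximum percolation time `t(G)`. -/
noncomputable def maxTime {V : Type} (G : SimpleGraph V) : ℕ :=
  sSup {t | ∃ S : Set V, Percolates G S ∧ percTime G S = t}

/-- `w` lists the vertices of an induced (chordless) path in `G`. -/
def IsInducedPath {V : Type} (G : SimpleGraph V) {n : ℕ} (w : Fin (n + 1) → V) : Prop :=
  Function.Injective w ∧
    ∀ i j : Fin (n + 1), G.Adj (w i) (w j) ↔ (i.1 + 1 = j.1 ∨ j.1 + 1 = i.1)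


lemma stage_mono {V : Type} (G : SimpleGraph V) {S T : Set V} (hST : S ⊆ T) :
    ∀ n, stage G S n ⊆ stage G T n := by
  intro n
  induction n with
  | zero => exact hST
  | succ n ih =>
    intro v hv
    rcases hv with hv | ⟨u, u', hne, ha, ha', hu, hu'⟩
    · exact Or.inl (ih hv)
    · exact Or.inr ⟨u, u', hne, ha, ha', ih hu, ih hu'⟩

lemma stage_union_singleton {V : Type} (G : SimpleGraph V) (S : Set V) (z : V) :
    ∀ n, ∀ v ∈ stage G (S ∪ {z}) n,
      v ∈ stage G S n ∨ ∃ p : G.Walk z v, p.length ≤ n := by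
  intro n
  induction n with
  | zero =>
    intro v hv
    rcases hv with hv | hv
    · exact Or.inl hv
    · rcases hv with rfl
      exact Or.inr ⟨SimpleGraph.Walk.nil, by simp⟩
  | succ n ih =>
    intro v hv
    rcases hv with hv | ⟨u, u', hne, ha, ha', hu, hu'⟩
    · rcases ih v hv with h | ⟨p, hp⟩
      · exact Or.inl (Or.inl h)
      · exact Or.inr ⟨p, hp.trans (Nat.le_succ n)⟩
    · rcases ih u hu with h1 | ⟨p, hp⟩
      · rcases ih u' hu' with h2 | ⟨p, hp⟩
        · exact Or.inl (Or.inr ⟨u, u', hne, ha, ha', h1, h2⟩)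
        · refine Or.inr ⟨p.concat ha'.symm, ?_⟩
          simpa [SimpleGraph.Walk.length_concat] using hp
      · refine Or.inr ⟨p.concat ha.symm, ?_⟩
        simpa [SimpleGraph.Walk.length_concat] using hp

theorem stmt9 {V : Type} (G : SimpleGraph V) (S : Set V) (z w : V) (k : ℕ)
    (hz : z ∉ S) (hdist : ∀ p : G.Walk z w, k ≤ p.length)
    (h : (k : ℕ∞) ≤ infTime G S w) :
    infTime G (S ∪ {z}) w ≤ infTime G S w ∧ (k : ℕ∞) ≤ infTime G (S ∪ {z}) w := by
  constructor
  · apply sInf_le_sInf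
    rintro n ⟨i, rfl, hi⟩
    exact ⟨i, rfl, stage_mono G Set.subset_union_left i hi⟩
  · apply le_sInf
    rintro n ⟨i, rfl, hi⟩
    rcases stage_union_singleton G S z i w hi with hw | ⟨p, hp⟩
    · have : infTime G S w ≤ (i : ℕ∞) := sInf_le ⟨i, rfl, hw⟩
      exact_mod_cast h.trans this
    · exact_mod_cast (hdist p).trans hp
end

section
/- Let G be a graph, k a positive integer, and u a vertex of G. Then t(G) ≥ k if and only if there exists a vertex u and a percolating set S containing all vertices at distance at least k from u such that t(G,S,u) = k. -/
open SimpleGraph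

lemma subset_infectStep {V : Type} (G : SimpleGraph V) (S : Set V) : S ⊆ infectStep G S :=
  Set.subset_union_left

lemma infectStep_mono {V : Type} (G : SimpleGraph V) {A B : Set V} (h : A ⊆ B) :
    infectStep G A ⊆ infectStep G B := by
  rintro v (h1 | ⟨x, y, hxy, hvx, hvy, hx, hy⟩)
  · exact Or.inl (h h1)
  · exact Or.inr ⟨x, y, hxy, hvx, hvy, h hx, h hy⟩

lemma stage_mono_set {V : Type} (G : SimpleGraph V) {A B : Set V} (h : A ⊆ B) (n : ℕ) :
    stage G A n ⊆ stage G B n := by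
  induction n with
  | zero => exact h
  | succ n ih => exact infectStep_mono G ih

lemma stage_subset_succ {V : Type} (G : SimpleGraph V) (S : Set V) (n : ℕ) :
    stage G S n ⊆ stage G S (n + 1) :=
  subset_infectStep G _

lemma stage_mono_n {V : Type} (G : SimpleGraph V) (S : Set V) {m n : ℕ} (h : m ≤ n) :
    stage G S m ⊆ stage G S n := by
  induction n with
  | zero => simpa [Nat.le_zero.mp h] using Set.Subset.rfl
  | succ n ih =>
    rcases Nat.lt_or_ge m (n+1) with h' | h'
    · exact (ih (Nat.lt_succ_iff.mp h')).trans (stage_subset_succ G S n)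
    · have : m = n + 1 := le_antisymm h h'
      simp [this]

lemma stage_add {V : Type} (G : SimpleGraph V) (S : Set V) (m n : ℕ) :
    stage G S (m + n) = stage G (stage G S m) n := by
  induction n with
  | zero => rfl
  | succ n ih => show infectStep G (stage G S (m + n)) = _ ; rw [ih]; rfl

lemma stage_union_subset {V : Type} (G : SimpleGraph V) (A B : Set V) (i : ℕ) :
    stage G (A ∪ B) i ⊆ stage G A i ∪ {v | ∃ b ∈ B, ∃ p : G.Walk b v, p.length ≤ i} := by
  induction i with
  | zero =>
    rintro v (h | h)
    · exact Or.inl h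
    · exact Or.inr ⟨v, h, Walk.nil, le_refl 0⟩
  | succ i ih =>
    rintro v (hv | ⟨x, y, hxy, hvx, hvy, hx, hy⟩)
    · rcases ih hv with h | ⟨b, hb, p, hp⟩
      · exact Or.inl (stage_subset_succ G A i h)
      · exact Or.inr ⟨b, hb, p, hp.trans (Nat.le_succ i)⟩
    · rcases ih hx with hx' | ⟨b, hb, p, hp⟩
      · rcases ih hy with hy' | ⟨b, hb, p, hp⟩
        · exact Or.inl (Or.inr ⟨x, y, hxy, hvx, hvy, hx', hy'⟩)
        · exact Or.inr ⟨b, hb, p.concat hvy.symm, by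
            rw [Walk.length_concat]; omega⟩
      · exact Or.inr ⟨b, hb, p.concat hvx.symm, by
          rw [Walk.length_concat]; omega⟩

lemma infTime_le {V : Type} (G : SimpleGraph V) (S : Set V) {u : V} {i : ℕ}
    (h : u ∈ stage G S i) : infTime G S u ≤ (i : ℕ∞) :=
  sInf_le ⟨i, rfl, h⟩

lemma infTime_eq {V : Type} (G : SimpleGraph V) (S : Set V) {u : V} {k : ℕ}
    (hmem : u ∈ stage G S k) (hnot : ∀ i < k, u ∉ stage G S i) : infTime G S u = (k : ℕ∞) := by
  refine le_antisymm (infTime_le G S hmem) (le_sInf ?_)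
  rintro n ⟨i, rfl, hi⟩
  exact_mod_cast Nat.le_of_not_lt (fun h => hnot i h hi)

lemma stage_stable {V : Type} (G : SimpleGraph V) (S : Set V) {i : ℕ}
    (h : stage G S i = stage G S (i + 1)) (j : ℕ) : stage G S (i + j) = stage G S i := by
  induction j with
  | zero => rfl
  | succ j ih =>
    have : stage G S (i + (j + 1)) = infectStep G (stage G S (i + j)) := rfl
    rw [this, ih]
    exact h.symm

lemma percTime_le_card {V : Type} [Fintype V] (G : SimpleGraph V) {S : Set V}
    (h : Percolates G S) : percTime G S ≤ Fintype.card V := by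
  set T := percTime G S with hT
  have hTuniv : stage G S T = Set.univ := Nat.sInf_mem h
  have key : ∀ i ≤ T, i ≤ (stage G S i).ncard := by
    intro i hi
    induction i with
    | zero => exact Nat.zero_le _
    | succ i ih =>
      have hi' : i ≤ T := le_of_lt hi
      have h1 : i ≤ (stage G S i).ncard := ih hi'
      have hss : stage G S i ⊂ stage G S (i + 1) := by
        refine ⟨stage_subset_succ G S i, fun hsub => ?_⟩
        have heq : stage G S i = stage G S (i + 1) :=
          le_antisymm (stage_subset_succ G S i) hsub
        have : stage G S (i + (T - i)) = stage G S i := stage_stable G S heq _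
        rw [Nat.add_sub_cancel' hi'] at this
        have hne : stage G S i ≠ Set.univ :=
          Nat.notMem_of_lt_sInf (show i < T from hi)
        exact hne (this ▸ hTuniv)
      have := Set.ncard_lt_ncard hss (Set.toFinite _)
      omega
  have h2 := key T le_rfl
  have h3 : (stage G S T).ncard ≤ Fintype.card V := by
    have := Set.ncard_le_ncard (Set.subset_univ (stage G S T)) (Set.toFinite _)
    simpa [Set.ncard_univ] using this
  omega

lemma percolates_univ {V : Type} (G : SimpleGraph V) : Percolates G (Set.univ : Set V) :=
  ⟨0, rfl⟩

lemma maxTime_mem {V : Type} [Fintype V] (G : SimpleGraph V) :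
    ∃ S : Set V, Percolates G S ∧ percTime G S = maxTime G := by
  have hne : {t | ∃ S : Set V, Percolates G S ∧ percTime G S = t}.Nonempty :=
    ⟨percTime G Set.univ, Set.univ, percolates_univ G, rfl⟩
  have hbdd : BddAbove {t | ∃ S : Set V, Percolates G S ∧ percTime G S = t} := by
    refine ⟨Fintype.card V, ?_⟩
    rintro t ⟨S, hS, rfl⟩
    exact percTime_le_card G hS
  exact Nat.sSup_mem hne hbdd

theorem stmt10 {V : Type} [Fintype V] (G : SimpleGraph V) (k : ℕ) (hk : 1 ≤ k) :
    k ≤ maxTime G ↔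
      ∃ (u : V) (S : Set V), Percolates G S ∧
        (∀ w : V, (∀ p : G.Walk u w, k ≤ p.length) → w ∈ S) ∧
        infTime G S u = (k : ℕ∞) := by
  constructor
  · intro hkM
    obtain ⟨S, hS, hT⟩ := maxTime_mem G
    set T := percTime G S with hTdef
    have hkT : k ≤ T := hT ▸ hkM
    have hTuniv : stage G S T = Set.univ := Nat.sInf_mem hS
    have hT1 : stage G S (T - 1) ≠ Set.univ :=
      Nat.notMem_of_lt_sInf (show T - 1 < percTime G S by omega)
    obtain ⟨u, hu⟩ := Set.ne_univ_iff_exists_notMem _ |>.mp hT1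
    set S₁ := stage G S (T - k) with hS₁
    set B : Set V := {w | ∀ p : G.Walk u w, k ≤ p.length} with hB
    have hstage : ∀ i : ℕ, stage G S₁ i = stage G S (T - k + i) := fun i =>
      (stage_add G S (T - k) i).symm
    have hS₁k : stage G S₁ k = Set.univ := by
      rw [hstage, Nat.sub_add_cancel hkT, hTuniv]
    refine ⟨u, S₁ ∪ B, ?_, fun w hw => Or.inr hw, ?_⟩
    · exact ⟨k, Set.eq_univ_of_univ_subset (hS₁k ▸ stage_mono_set G Set.subset_union_left k)⟩
    · refine infTime_eq G _ ?_ ?_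
      · have := stage_mono_set G (Set.subset_union_left (s := S₁) (t := B)) k
        rw [hS₁k] at this
        exact this (Set.mem_univ u)
      · intro i hik hmem
        rcases stage_union_subset G S₁ B i hmem with h | ⟨b, hb, p, hp⟩
        · rw [hstage] at h
          have : stage G S (T - k + i) ⊆ stage G S (T - 1) :=
            stage_mono_n G S (by omega)
          exact hu (this h)
        · have := hb p.reverse
          rw [Walk.length_reverse] at this
          omega
  · rintro ⟨u, S, hperc, _, hinf⟩
    have h1 : k ≤ percTime G S := by
      have huniv : stage G S (percTime G S) = Set.univ := Nat.sInf_mem hperc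
      have hu : u ∈ stage G S (percTime G S) := huniv ▸ Set.mem_univ u
      have := infTime_le G S hu
      rw [hinf] at this
      exact_mod_cast this
    have h2 : percTime G S ≤ maxTime G := by
      refine le_csSup ?_ ⟨S, hperc, rfl⟩
      refine ⟨Fintype.card V, ?_⟩
      rintro t ⟨S', hS', rfl⟩
      exact percTime_le_card G hS'
    omega
end
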